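/- The coproduct ϖ satisfies the compatibility ϖ ∘ B₋ = (id ⊗ B₋) ∘ ϖ, where B₋ sends the single-leaf tree ∘ to 0 and sends b = B₊(b₁,…,b_m) to the product b₁ • ⋯ • b_m in the tensor algebra. -/

import Mathlib

inductive PTree : Type
  | node : List PTree → PTree

namespace PTree

instance : Inhabited PTree := ⟨node []⟩

/-- the single-leaf tree ∘ -/
def leaf : PTree := node []

/-- number of leaves ‖b‖ -/
def leaves : PTree → ℕ
  | node ts => if ts.isEmpty then 1 else (ts.attach.map fun t => leaves t.1).sum
decreasing_by simp only [PTree.node.sizeOf_spec]; have := List.sizeOf_lt_of_mem t.2; omega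


/-- number of internal vertices |b| -/
def internals : PTree → ℕ
  | node ts => if ts.isEmpty then 0 else 1 + (ts.attach.map fun t => internals t.1).sum
decreasing_by simp only [PTree.node.sizeOf_spec]; have := List.sizeOf_lt_of_mem t.2; omega


/-- total number of vertices N(b) -/
def Ntot (b : PTree) : ℕ := b.leaves + b.internals

/-- non-degenerate: every internal vertex has at least two children -/
def ND : PTree → Prop
  | node ts => ts.isEmpty ∨ (2 ≤ ts.length ∧ ∀ t ∈ ts.attach, ND t.1)
decreasing_by simp only [PTree.node.sizeOf_spec]; have := List.sizeOf_lt_of_mem t.2; omega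


/-- the list of numbers of children of the internal vertices of b -/
def childCounts : PTree → List ℕ
  | node ts => if ts.isEmpty then [] else ts.length :: (ts.attach.map fun t => childCounts t.1).flatten
decreasing_by simp only [PTree.node.sizeOf_spec]; have := List.sizeOf_lt_of_mem t.2; omega


mutual
/-- graft trees from the list E onto the successive leaves of b (left to right);
returns the grafted tree together with the unused suffix of E. -/
def graft : PTree → List PTree → PTree × List PTree
  | node ts, E =>
    if ts.isEmpty then (E.headI, E.tail)
    else
      let p := graftL ts E
      (node p.1, p.2)
/-- graft trees from the list E onto the leaves of the forest l -/
def graftL : List PTree → List PTree → List PTree × List PTree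
  | [], E => ([], E)
  | t :: ts, E =>
    let p := graft t E
    let q := graftL ts p.2
    (p.1 :: q.1, q.2)
end

/-- E ∝ b : graft the tuple E onto the leaves of b -/
def graftT (b : PTree) (E : List PTree) : PTree := (b.graft E).1

mutual
/-- the list of all decompositions b = E ∝ c, as pairs (c, E) -/
def decomps : PTree → List (PTree × List PTree)
  | node ts =>
    (leaf, [node ts]) ::
      (if ts.isEmpty then []
       else (decompsL ts).map fun p => (node p.1, p.2))
/-- decompositions of a forest: pairs (list of bases, concatenated grafted tuples) -/
def decompsL : List PTree → List (List PTree × List PTree)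
  | [] => [([], [])]
  | t :: ts =>
    (decomps t).flatMap fun p => (decompsL ts).map fun q => (p.1 :: q.1, p.2 ++ q.2)
end

theorem leaves_pos : ∀ b : PTree, 0 < b.leaves
  | node ts => by
    show 0 < leaves (node ts)
    unfold leaves
    split
    · exact one_pos
    · rename_i h
      have hne : ts ≠ [] := by simpa [List.isEmpty_iff] using h
      obtain ⟨t, ts', rfl⟩ := List.exists_cons_of_ne_nil hne
      have := leaves_pos t
      simp only [List.attach_cons, List.map_cons, List.sum_cons]
      positivity

end PTree

open TensorProduct

/-- non-degenerate planar trees -/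
def NDTree := {b : PTree // b.ND}

/-- the tensor algebra ℱ over the span 𝒜 of non-degenerate planar trees -/
abbrev TA := TensorAlgebra ℝ (NDTree →₀ ℝ)

open scoped Classical in
/-- a non-degenerate planar tree seen as an element of ℱ -/
noncomputable def iotaT (t : PTree) : TA :=
  if h : t.ND then TensorAlgebra.ι ℝ (Finsupp.single (⟨t, h⟩ : NDTree) (1 : ℝ)) else 0

/-- the coproduct ϖ : ℱ → ℱ ⊗ ℱ, ϖ(b) = Σ_{E ∝ c = b} (E₁ • ⋯ • E_k) ⊗ c -/
noncomputable def cop : TA →ₐ[ℝ] TA ⊗[ℝ] TA :=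
  TensorAlgebra.lift ℝ
    ((Finsupp.lift (TA ⊗[ℝ] TA) ℝ NDTree) fun b =>
      ((PTree.decomps b.1).map fun p => ((p.2.map iotaT).prod) ⊗ₜ[ℝ] iotaT p.1).sum)

/-- B₋ : sends ∘ to 0 and B₊(b₁,…,b_m) to b₁ • ⋯ • b_m -/
noncomputable def Bminus : PTree → TA
  | PTree.node ts => if ts.isEmpty then 0 else (ts.map iotaT).prod

/-- isomorphism of rooted trees (forgetting the planar order) -/
def RIso : PTree → PTree → Prop
  | .node ts, .node ss =>
    ∃ e : Fin ts.length ≃ Fin ss.length, ∀ i : Fin ts.length, RIso (ts.get i) (ss.get (e i))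
termination_by b _ => sizeOf b
decreasing_by
  simp only [PTree.node.sizeOf_spec]
  have h : sizeOf (ts.get i) < sizeOf ts :=
    List.sizeOf_lt_of_mem (by exact ts.get_mem i)
  omega

open Matrix in
/-- the solution of −y′ = A*y with y(0) = y⁰ -/
noncomputable def adjSol {n : ℕ} (A : Matrix (Fin n) (Fin n) ℝ) (y0 : Fin n → ℝ) (t : ℝ) :
    Fin n → ℝ := (NormedSpace.exp ((-t) • Aᵀ)) *ᵥ y0



set_option synthInstance.maxHeartbeats 1000000
set_option maxHeartbeats 1000000

lemma list_sum_flatMap {α M} [AddCommMonoid M] (l : List α) (g : α → List M) :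
    (l.flatMap g).sum = (l.map fun a => (g a).sum).sum := by
  induction l with
  | nil => simp
  | cons a l ih => simp [ih]

lemma cop_iotaT (t : PTree) (h : t.ND) :
    cop (iotaT t) =
      ((PTree.decomps t).map fun p => ((p.2.map iotaT).prod) ⊗ₜ[ℝ] iotaT p.1).sum := by
  classical
  rw [iotaT, dif_pos h]
  simp [cop, TensorAlgebra.lift_ι_apply, Finsupp.lift_apply, Finsupp.sum_single_index]
  erw [Finsupp.sum_single_index (by simp)]
  simp

lemma decompsL_fst_length : ∀ (ts : List PTree), ∀ p ∈ PTree.decompsL ts, p.1.length = ts.length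
  | [], p, hp => by
    simp [PTree.decompsL] at hp; simp [hp]
  | t :: ts, p, hp => by
    simp only [PTree.decompsL, List.mem_flatMap, List.mem_map] at hp
    obtain ⟨q, _, r, hr, rfl⟩ := hp
    simp [decompsL_fst_length ts r hr]

lemma prod_cop_iotaT : ∀ (ts : List PTree), (∀ t ∈ ts, t.ND) →
    (ts.map (fun t => cop (iotaT t))).prod =
      ((PTree.decompsL ts).map fun p =>
        ((p.2.map iotaT).prod) ⊗ₜ[ℝ] ((p.1.map iotaT).prod)).sum
  | [], _ => by
    simp [PTree.decompsL, Algebra.TensorProduct.one_def]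
  | t :: ts, hnd => by
    have ht : t.ND := hnd t (by simp)
    have hts : ∀ s ∈ ts, s.ND := fun s hs => hnd s (by simp [hs])
    rw [List.map_cons, List.prod_cons, cop_iotaT t ht, prod_cop_iotaT ts hts]
    conv_rhs => rw [PTree.decompsL]
    rw [List.map_flatMap, list_sum_flatMap]
    simp only [List.map_map, Function.comp_def, List.map_cons, List.prod_cons,
      List.map_append, List.prod_append, ← Algebra.TensorProduct.tmul_mul_tmul,
      List.sum_map_mul_left, List.sum_map_mul_right]

/-- ϖ ∘ B₋ = (id ⊗ B₋) ∘ ϖ, i.e. for every non-degenerate planar tree b,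
ϖ(B₋(b)) = Σ_{E ∝ c = b} (E₁ • ⋯ • E_k) ⊗ B₋(c). -/
theorem cop_comp_Bminus (b : PTree) (hb : b.ND) :
    cop (Bminus b) =
      ((PTree.decomps b).map fun p => ((p.2.map iotaT).prod) ⊗ₜ[ℝ] Bminus p.1).sum := by
  obtain ⟨ts⟩ := b
  by_cases h : ts.isEmpty
  · have hts : ts = [] := List.isEmpty_iff.mp h
    subst hts
    simp [Bminus, PTree.decomps, PTree.leaf]
  · have hnd : ∀ t ∈ ts, t.ND := by
      rw [PTree.ND] at hb
      rcases hb with h' | ⟨_, h'⟩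
      · exact absurd h' h
      · intro t htm; exact h' ⟨t, htm⟩ (List.mem_attach _ _)
    rw [show Bminus (PTree.node ts) = (ts.map iotaT).prod from if_neg h,
      map_list_prod, List.map_map]
    rw [show ((cop : TA →ₐ[ℝ] TA ⊗[ℝ] TA) : TA → TA ⊗[ℝ] TA) ∘ iotaT
        = fun t => cop (iotaT t) from rfl, prod_cop_iotaT ts hnd]
    conv_rhs => rw [PTree.decomps]
    rw [if_neg h, List.map_cons, List.sum_cons, List.map_map]
    have h0 : Bminus PTree.leaf = 0 := by simp [Bminus, PTree.leaf]
    rw [h0, TensorProduct.tmul_zero, zero_add]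
    refine congrArg List.sum (List.map_congr_left fun p hp => ?_)
    have hlen : p.1.length = ts.length := decompsL_fst_length ts p hp
    have hne : ¬ p.1.isEmpty := by
      rw [List.isEmpty_iff, ← List.length_eq_zero_iff, hlen]
      simpa [List.isEmpty_iff, List.length_eq_zero_iff] using h
    simp only [Function.comp_def, Bminus, if_neg hne]
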